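/- arXiv:2203.15094 — 2 statements merged into one kernel-verified Lean document; each statement's English description precedes it below -/
import Mathlib

section
/- Let M = (S, ρ) be a matroid scheme and a an atom of S with ρ(a) = 0 (a loop). Then the deletion M − a is isomorphic to the contraction M/a; explicitly, the map φ: S_{≥a} → S_{≱a} sending z to z∖a (the complement of a in the Boolean lattice S_{≤z}) is an order isomorphism satisfying ρ(z) = ρ(φ(z)) for all z ∈ S_{≥a}. -/
/-- The set of minimal upper bounds of `x` and `y` (denoted `x ∨ y` in the paper). -/
def mub {S : Type*} [PartialOrder S] (x y : S) : Set S :=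
  {u | x ≤ u ∧ y ≤ u ∧ ∀ v, x ≤ v → y ≤ v → v ≤ u → v = u}

/-- The set of maximal lower bounds of `x` and `y` (denoted `x ∧ y` in the paper). -/
def mlb {S : Type*} [PartialOrder S] (x y : S) : Set S :=
  {l | l ≤ x ∧ l ≤ y ∧ ∀ m, m ≤ x → m ≤ y → l ≤ m → m = l}

/-- The set of minimal upper bounds of a subset `T`. -/
def mubSet {S : Type*} [PartialOrder S] (T : Set S) : Set S :=
  {u | (∀ t ∈ T, t ≤ u) ∧ ∀ v, (∀ t ∈ T, t ≤ v) → v ≤ u → v = u}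

/-- The number of atoms below `x`, i.e. `|x|`, the rank of `x` in a simplicial poset. -/
noncomputable def natRank {S : Type*} [PartialOrder S] [OrderBot S] (x : S) : ℕ :=
  Nat.card {a : S // IsAtom a ∧ a ≤ x}

/-- A finite bounded-below poset is simplicial if every lower interval is isomorphic to
the Boolean lattice of subsets of the set of atoms below. -/
def IsSimplicialPoset (S : Type*) [PartialOrder S] [OrderBot S] [Fintype S] : Prop :=
  ∀ x : S, Nonempty (Set.Iic x ≃o Set {a : S // IsAtom a ∧ a ≤ x})

/-- A matroid scheme: a rank function `ρ` on a finite simplicial poset `S`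
satisfying (M1)–(M5). -/
structure IsMatroidScheme {S : Type*} [PartialOrder S] [OrderBot S] [Fintype S]
    (ρ : S → ℕ) : Prop where
  simplicial : IsSimplicialPoset S
  M1 : ∀ x : S, ρ x ≤ natRank x
  M2 : ∀ ⦃x y : S⦄, x ≤ y → ρ x ≤ ρ y
  M3 : ∀ x y u l : S, u ∈ mub x y → l ∈ mlb x y → ρ u + ρ l ≤ ρ x + ρ y
  M4 : ∀ x y l : S, l ∈ mlb x y → ρ x = ρ l → (mub x y).Nonempty
  M5 : ∀ x y : S, ρ x < ρ y →
    ∃ a : S, IsAtom a ∧ a ≤ y ∧ ¬ a ≤ x ∧ (mub x a).Nonempty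

/-- `cl` is the closure operator of a matroid scheme `(S, ρ)`:
`cl x` is the greatest element above `x` of the same rank. -/
def IsClosureFun {S : Type*} [PartialOrder S] (ρ : S → ℕ) (cl : S → S) : Prop :=
  ∀ x : S, x ≤ cl x ∧ ρ (cl x) = ρ x ∧ ∀ y : S, x ≤ y → ρ y = ρ x → y ≤ cl x

/-- The bases of a matroid scheme: the maximal independent elements. -/
def Bases {S : Type*} [PartialOrder S] [OrderBot S] (ρ : S → ℕ) : Set S :=
  {x | ρ x = natRank x ∧ ∀ w, ρ w = natRank w → x ≤ w → w = x}

/-- The circuits of a matroid scheme: the minimal dependent elements. -/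
def Circuits {S : Type*} [PartialOrder S] [OrderBot S] (ρ : S → ℕ) : Set S :=
  {x | ρ x < natRank x ∧ ∀ y, ρ y < natRank y → y ≤ x → y = x}

/-- `c` is the complement `x ∖ a` of `a` in the Boolean lattice `S_{≤ x}`. -/
def IsComplementIn {S : Type*} [PartialOrder S] [OrderBot S] (c a x : S) : Prop :=
  c ≤ x ∧ a ≤ x ∧ (∀ l : S, l ≤ c → l ≤ a → l = ⊥) ∧
    (∀ u : S, u ≤ x → c ≤ u → a ≤ u → u = x)

/-- The rank of a matroid scheme: the common value of `ρ` on maximal elements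
(equal to the maximum value of `ρ`). -/
noncomputable def schemeRank {S : Type*} [Fintype S] (ρ : S → ℕ) : ℕ :=
  sSup (Set.range ρ)

/-- The Tutte polynomial of a matroid scheme, as a two-variable integer function. -/
noncomputable def tutte {S : Type*} [PartialOrder S] [OrderBot S] [Fintype S]
    (ρ : S → ℕ) (x y : ℤ) : ℤ :=
  ∑ w : S, (x - 1) ^ (schemeRank ρ - ρ w) * (y - 1) ^ (natRank w - ρ w)

/-- An element of a poset is an order-atom if it covers a global minimum. -/
def OrdAtom {P : Type*} [PartialOrder P] (a : P) : Prop :=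
  ∃ b : P, (∀ z : P, b ≤ z) ∧ b ⋖ a

/-- A partial order is a geometric lattice: it is bounded below, every pair has a least
upper bound and greatest lower bound, it is atomistic, and it is (upper) semimodular. -/
def IsGeomLatOrder (P : Type*) [PartialOrder P] : Prop :=
  (∃ b : P, ∀ x : P, b ≤ x) ∧
  (∀ x y : P, ∃ u : P, IsLUB {x, y} u) ∧
  (∀ x y : P, ∃ l : P, IsGLB {x, y} l) ∧
  (∀ x : P, IsLUB {a : P | OrdAtom a ∧ a ≤ x} x) ∧
  (∀ x y m j : P, IsGLB {x, y} m → IsLUB {x, y} j → m ⋖ x → y ⋖ j)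

/-- A geometric poset: a finite bounded-below poset with rank function `rk`
satisfying (G1) and (G2). -/
def IsGeometricPoset (P : Type*) [PartialOrder P] [OrderBot P] [Fintype P]
    (rk : P → ℕ) : Prop :=
  rk ⊥ = 0 ∧
  (∀ ⦃x y : P⦄, x ≤ y → rk x ≤ rk y) ∧
  (∀ x y : P, x ⋖ y → rk y = rk x + 1) ∧
  (∀ m : P, IsMax m → IsGeomLatOrder (Set.Iic m)) ∧
  (∀ (x : P) (A : Set P), (∀ a ∈ A, IsAtom a) →
    ∀ y ∈ mubSet A, rk x < rk y → rk y = Nat.card A →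
      ∃ a ∈ A, ¬ a ≤ x ∧ ∃ w : P, x ≤ w ∧ a ≤ w)

/-!
Each lower interval `S_{≤z}` is Boolean, so for `a ≤ z` the complement `z ∖ a` exists, is unique,
and grows with `z`. Since `a` is a loop, (M3) applied to `a` and `z ∖ a` (meeting in `0̂`, joined
by `z`) gives `ρ(z ∖ a) = ρ(z)`. Conversely, for `x ≱ a` the pair `x, a` meets in `0̂` with
`ρ(0̂) = ρ(a)`, so (M4) provides `z` with `x = z ∖ a`; and if `x = z₁ ∖ a = z₂ ∖ a`, then `ρ` is
constant between `x` and `z₁`, so (M4) gives `z₁, z₂` a common upper bound `u`, and in the Boolean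
lattice `S_{≤u}` both equal the join of `x` and `a`. The same join argument shows that
`z ↦ z ∖ a` reflects the order.
-/

theorem OrderIso.disjoint_apply_iff {α β : Type*} [PartialOrder α] [OrderBot α] [PartialOrder β]
    [OrderBot β] (e : α ≃o β) {x y : α} : Disjoint (e x) (e y) ↔ Disjoint x y := by
  refine ⟨fun h z hzx hzy => ?_, fun h z hzx hzy => ?_⟩
  · simpa using h (e.monotone hzx) (e.monotone hzy)
  · have := h (e.symm_apply_le.mpr hzx) (e.symm_apply_le.mpr hzy)
    rwa [e.symm_apply_le, e.map_bot] at this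

theorem OrderIso.isCompl_apply_iff {α β : Type*} [PartialOrder α] [BoundedOrder α]
    [PartialOrder β] [BoundedOrder β] (e : α ≃o β) {x y : α} :
    IsCompl (e x) (e y) ↔ IsCompl x y := by
  rw [_root_.isCompl_iff, _root_.isCompl_iff, e.disjoint_apply_iff, ← disjoint_toDual_iff,
    ← disjoint_toDual_iff]
  exact and_congr_right' e.dual.disjoint_apply_iff

section OrderIsoLattice

variable {P α : Type*} [PartialOrder P]

theorem OrderIso.exists_isLUB_pair [SemilatticeSup α] (e : P ≃o α) (x y : P) :
    ∃ j, IsLUB {x, y} j :=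
  ⟨e.symm (e x ⊔ e y), by rw [← e.isLUB_image, Set.image_pair]; exact isLUB_pair⟩

variable [BoundedOrder P]

theorem OrderIso.exists_isCompl [Lattice α] [BoundedOrder α] [ComplementedLattice α]
    (e : P ≃o α) (a : P) : ∃ c, IsCompl c a := by
  obtain ⟨c, hc⟩ := ComplementedLattice.exists_isCompl (e a)
  exact ⟨e.symm c, by rw [← e.isCompl_apply_iff, e.apply_symm_apply]; exact hc.symm⟩

theorem OrderIso.le_of_disjoint_of_isCompl [DistribLattice α] [BoundedOrder α] (e : P ≃o α)
    {x a c : P} (hx : Disjoint x a) (hc : IsCompl c a) : x ≤ c :=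
  e.le_iff_le.mp <| (e.disjoint_apply_iff.mpr hx).le_of_codisjoint
    (e.isCompl_apply_iff.mpr hc).symm.codisjoint

end OrderIsoLattice

section MinimalBounds

variable {S : Type*} [PartialOrder S] {c x y z u : S}

theorem exists_mem_mlb_ge [Finite S] (hx : c ≤ x) (hy : c ≤ y) : ∃ l ∈ mlb x y, c ≤ l := by
  obtain ⟨l, hcl, hl⟩ := (Set.toFinite {m | m ≤ x ∧ m ≤ y}).exists_le_maximal ⟨hx, hy⟩
  exact ⟨l, ⟨hl.prop.1, hl.prop.2, fun m hmx hmy hlm => (hl.eq_of_le ⟨hmx, hmy⟩ hlm).symm⟩, hcl⟩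

theorem IsLUB.mem_mub {x y j : Set.Iic u} (hj : IsLUB {x, y} j) : (j : S) ∈ mub (x : S) y := by
  refine ⟨hj.1 (by simp), hj.1 (by simp), fun v hxv hyv hvj => le_antisymm hvj ?_⟩
  exact hj.2 (show (⟨v, hvj.trans j.2⟩ : Set.Iic u) ∈ upperBounds {x, y} by
    rintro w (rfl | rfl)
    exacts [hxv, hyv])

theorem IsLUB.eq_of_mem_mub {x y j : Set.Iic u} (hj : IsLUB {x, y} j) (hz : z ∈ mub (x : S) y)
    (hzu : z ≤ u) : z = j :=
  (hz.2.2 j (hj.1 (by simp)) (hj.1 (by simp))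
    (hj.2 (show (⟨z, hzu⟩ : Set.Iic u) ∈ upperBounds {x, y} by
      rintro w (rfl | rfl)
      exacts [hz.1, hz.2.1]))).symm

end MinimalBounds

section Poset

variable {S : Type*} [PartialOrder S] [OrderBot S] {a c x y z u : S}

theorem Set.Iic.disjoint_mk_iff (hx : x ≤ z) (hy : y ≤ z) :
    Disjoint (⟨x, hx⟩ : Set.Iic z) ⟨y, hy⟩ ↔ Disjoint x y :=
  ⟨fun h w hwx hwy => h (x := ⟨w, hwx.trans hx⟩) hwx hwy, fun h _ hwx hwy => h hwx hwy⟩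

theorem IsAtom.disjoint_of_not_le (ha : IsAtom a) (hax : ¬ a ≤ x) : Disjoint x a := by
  intro l hlx hla
  rcases ha.le_iff.mp hla with rfl | rfl
  · exact le_rfl
  · exact absurd hlx hax

theorem bot_mem_mlb_of_disjoint (h : Disjoint x y) : ⊥ ∈ mlb x y :=
  ⟨bot_le, bot_le, fun _ hmx hmy _ => le_bot_iff.mp (h hmx hmy)⟩

theorem isComplementIn_iff_mem_mub : IsComplementIn c a z ↔ z ∈ mub a c ∧ Disjoint c a := by
  refine ⟨fun ⟨hcz, haz, hdisj, hmin⟩ => ⟨⟨haz, hcz, fun v hav hcv hvz => hmin v hvz hcv hav⟩,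
      fun l hlc hla => (hdisj l hlc hla).le⟩,
    fun ⟨⟨haz, hcz, hmin⟩, hdisj⟩ => ⟨hcz, haz, fun l hlc hla => le_bot_iff.mp (hdisj hlc hla),
      fun v hvz hcv hav => hmin v hav hcv hvz⟩⟩

theorem isComplementIn_iff_isCompl :
    IsComplementIn c a z ↔ ∃ (hc : c ≤ z) (ha : a ≤ z), IsCompl (⟨c, hc⟩ : Set.Iic z) ⟨a, ha⟩ := by
  constructor
  · rintro ⟨hcz, haz, hdisj, hmin⟩
    exact ⟨hcz, haz, (Set.Iic.disjoint_mk_iff hcz haz).mpr fun l hlc hla => (hdisj l hlc hla).le,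
      fun w hcw haw => (hmin w w.2 hcw haw).ge⟩
  · rintro ⟨hcz, haz, hdisj, hcodisj⟩
    exact ⟨hcz, haz,
      fun l hlc hla => le_bot_iff.mp ((Set.Iic.disjoint_mk_iff hcz haz).mp hdisj hlc hla),
      fun v hvz hcv hav => le_antisymm hvz (hcodisj (x := ⟨v, hvz⟩) hcv hav)⟩

theorem IsComplementIn.mem_mub (hc : IsComplementIn c a z) : z ∈ mub a c :=
  (isComplementIn_iff_mem_mub.mp hc).1

theorem IsComplementIn.disjoint (hc : IsComplementIn c a z) : Disjoint c a :=
  (isComplementIn_iff_mem_mub.mp hc).2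

theorem IsComplementIn.not_le (hc : IsComplementIn c a z) (ha : a ≠ ⊥) : ¬ a ≤ c :=
  fun hac => ha (le_bot_iff.mp (hc.disjoint hac le_rfl))

end Poset

namespace IsSimplicialPoset

set_option linter.unusedSectionVars false

variable {S : Type*} [PartialOrder S] [OrderBot S] [Fintype S] (hs : IsSimplicialPoset S)
  {a c c₁ c₂ x y z z₁ z₂ u : S}
include hs

theorem exists_isLUB_Iic (x y : Set.Iic u) : ∃ j, IsLUB {x, y} j :=
  (hs u).some.exists_isLUB_pair x y

theorem exists_mem_mub_le (hx : x ≤ u) (hy : y ≤ u) : ∃ j ∈ mub x y, j ≤ u := by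
  obtain ⟨j, hj⟩ := hs.exists_isLUB_Iic ⟨x, hx⟩ ⟨y, hy⟩
  exact ⟨j, hj.mem_mub, j.2⟩

theorem eq_of_mem_mub (h₁ : z₁ ∈ mub x y) (h₂ : z₂ ∈ mub x y) (hu₁ : z₁ ≤ u) (hu₂ : z₂ ≤ u) :
    z₁ = z₂ := by
  obtain ⟨j, hj⟩ := hs.exists_isLUB_Iic (u := u) ⟨x, h₁.1.trans hu₁⟩ ⟨y, h₁.2.1.trans hu₁⟩
  exact (hj.eq_of_mem_mub h₁ hu₁).trans (hj.eq_of_mem_mub h₂ hu₂).symm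

theorem exists_isComplementIn (ha : a ≤ z) : ∃ c, IsComplementIn c a z := by
  obtain ⟨c, hc⟩ := (hs z).some.exists_isCompl ⟨a, ha⟩
  exact ⟨c, isComplementIn_iff_isCompl.mpr ⟨c.2, ha, hc⟩⟩

theorem le_of_isComplementIn (hxz : x ≤ z) (hx : Disjoint x a) (hc : IsComplementIn c a z) :
    x ≤ c := by
  obtain ⟨hcz, haz, hc⟩ := isComplementIn_iff_isCompl.mp hc
  exact (hs z).some.le_of_disjoint_of_isCompl (x := ⟨x, hxz⟩)
    ((Set.Iic.disjoint_mk_iff hxz haz).mpr hx) hc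

theorem isComplementIn_unique (h₁ : IsComplementIn c₁ a z) (h₂ : IsComplementIn c₂ a z) :
    c₁ = c₂ :=
  (hs.le_of_isComplementIn h₁.1 h₁.disjoint h₂).antisymm
    (hs.le_of_isComplementIn h₂.1 h₂.disjoint h₁)

theorem exists_isComplementIn_le (ha : IsAtom a) (hxz : x ≤ z) (haz : a ≤ z) (hax : ¬ a ≤ x) :
    ∃ v ≤ z, IsComplementIn x a v := by
  obtain ⟨v, hv, hvz⟩ := hs.exists_mem_mub_le haz hxz
  exact ⟨v, hvz, isComplementIn_iff_mem_mub.mpr ⟨hv, ha.disjoint_of_not_le hax⟩⟩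

end IsSimplicialPoset

namespace IsMatroidScheme

variable {S : Type*} [PartialOrder S] [OrderBot S] [Fintype S] {ρ : S → ℕ}
  (h : IsMatroidScheme ρ) {a c c₁ c₂ x z z₁ z₂ : S}
include h

theorem rho_eq_of_isComplementIn (hloop : ρ a = 0) (hc : IsComplementIn c a z) : ρ c = ρ z := by
  have hsub := h.M3 a c z ⊥ hc.mem_mub (bot_mem_mlb_of_disjoint hc.disjoint.symm)
  have hmono := h.M2 hc.1
  omega

theorem exists_isComplementIn_of_loop (ha : IsAtom a) (hloop : ρ a = 0) (hax : ¬ a ≤ x) :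
    ∃ z, IsComplementIn x a z := by
  have hdisj := ha.disjoint_of_not_le hax
  have hbot : ρ a = ρ ⊥ := by have := h.M2 (bot_le : ⊥ ≤ a); omega
  obtain ⟨z, hz⟩ := h.M4 a x ⊥ (bot_mem_mlb_of_disjoint hdisj.symm) hbot
  exact ⟨z, isComplementIn_iff_mem_mub.mpr ⟨hz, hdisj⟩⟩

theorem eq_of_isComplementIn_of_loop (hloop : ρ a = 0) (h₁ : IsComplementIn c a z₁)
    (h₂ : IsComplementIn c a z₂) : z₁ = z₂ := by
  obtain ⟨l, hl, hcl⟩ := exists_mem_mlb_ge h₁.1 h₂.1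
  have hrl : ρ z₁ = ρ l := by
    have := h.M2 hcl
    have := h.M2 hl.1
    have := h.rho_eq_of_isComplementIn hloop h₁
    omega
  obtain ⟨u, hu⟩ := h.M4 z₁ z₂ l hl hrl
  exact h.simplicial.eq_of_mem_mub h₁.mem_mub h₂.mem_mub hu.1 hu.2.1

theorem isComplementIn_le_iff_of_loop (ha : IsAtom a) (hloop : ρ a = 0)
    (h₁ : IsComplementIn c₁ a z₁) (h₂ : IsComplementIn c₂ a z₂) : c₁ ≤ c₂ ↔ z₁ ≤ z₂ := by
  refine ⟨fun hc => ?_, fun hz => h.simplicial.le_of_isComplementIn (h₁.1.trans hz) h₁.disjoint h₂⟩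
  obtain ⟨v, hvz, hv⟩ :=
    h.simplicial.exists_isComplementIn_le ha (hc.trans h₂.1) h₂.2.1 (h₁.not_le ha.ne_bot)
  exact (h.eq_of_isComplementIn_of_loop hloop h₁ hv).trans_le hvz

end IsMatroidScheme

/-- Proposition 8.6: if `a` is a loop, then deletion and contraction by `a` are
isomorphic, via the map sending `z ∈ S_{≥a}` to the complement `z ∖ a` of `a` in
the Boolean lattice `S_{≤z}`; this map is an order isomorphism preserving `ρ`. -/
theorem statement14 {S : Type*} [PartialOrder S] [OrderBot S] [Fintype S]
    (ρ : S → ℕ) (h : IsMatroidScheme ρ) (a : S) (ha : IsAtom a) (hloop : ρ a = 0) :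
    ∃ φ : {z : S // a ≤ z} ≃o {x : S // ¬ a ≤ x},
      ∀ z : {z : S // a ≤ z},
        IsComplementIn (φ z).val a z.val ∧ ρ (φ z).val = ρ z.val := by
  choose c hc using fun z : {z : S // a ≤ z} => h.simplicial.exists_isComplementIn z.2
  let φ : {z : S // a ≤ z} ↪o {x : S // ¬ a ≤ x} :=
    OrderEmbedding.ofMapLEIff (fun z => ⟨c z, (hc z).not_le ha.ne_bot⟩)
      fun z w => h.isComplementIn_le_iff_of_loop ha hloop (hc z) (hc w)
  have hφ : Function.Surjective φ := by
    rintro ⟨x, hx⟩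
    obtain ⟨z, hz⟩ := h.exists_isComplementIn_of_loop ha hloop hx
    exact ⟨⟨z, hz.2.1⟩, Subtype.ext (h.simplicial.isComplementIn_unique (hc _) hz)⟩
  exact ⟨.ofSurjective φ hφ, fun z => ⟨hc z, h.rho_eq_of_isComplementIn hloop (hc z)⟩⟩
end

section
/- Let M = (S, ρ) be a matroid scheme and a an atom of S, and let T_M(x,y) = Σ_{w∈S} (x−1)^{ρ(M)−ρ(w)} (y−1)^{|w|−ρ(w)} be the Tutte polynomial. Then: (1) if a is neither a loop nor an isthmus, T_M(x,y) = T_{M−a}(x,y) + T_{M/a}(x,y); (2) if a is a loop, T_M(x,y) = y · T_{M/a}(x,y); (3) if a is an isthmus, T_M(x,y) = (x−1) · T_{M−a}(x,y) + T_{M/a}(x,y). -/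
/-!
Split the sum defining `T_M` according to whether `w ≥ a`. The elements above `a` form the
contraction `M / a`, where `|w|` drops by one and `ρ w` by `ρ a`; the others form the deletion
`M - a`, where nothing changes. So only the global ranks and the nullities need comparing:
`ρ(M / a) = ρ(M) - ρ(a)` because maximal elements have full rank (M5), and `ρ(M - a)` is `ρ(M)`
unless every basis contains `a`, when it is `ρ(M) - 1`; that bases have full rank is the usual
span argument from submodularity (M3). For a loop every `w ≥ a` has positive nullity, and
`w ↦ w ∨ a`, a well-defined join by (M4), identifies the deletion with the contraction, so the
two halves add up to `y · T_{M/a}`.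
-/

theorem OrderIso.isAtomistic {P Q : Type*} [PartialOrder P] [OrderBot P] [PartialOrder Q]
    [OrderBot Q] [IsAtomistic Q] (e : P ≃o Q) : IsAtomistic P where
  isLUB_atoms b := by
    obtain ⟨s, hsb, hs⟩ := isLUB_atoms (e b)
    refine ⟨e.symm '' s, by simpa using e.symm.isLUB_image.2 hsb, ?_⟩
    rintro _ ⟨q, hq, rfl⟩
    exact (e.symm.isAtom_iff q).2 (hs q hq)

theorem OrderIso.exists_isAtom_le_iff {P α : Type*} [PartialOrder P] [OrderBot P]
    (e : P ≃o Set α) {T : Set P} (hT : ∀ p ∈ T, IsAtom p) :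
    ∃ x, ∀ p, IsAtom p → (p ≤ x ↔ p ∈ T) := by
  refine ⟨e.symm (sSup (e '' T)), fun p hp => ?_⟩
  rw [← e.le_iff_le, e.apply_symm_apply, ((e.isAtom_iff p).2 hp).le_sSup]
  constructor
  · rintro ⟨_, ⟨q, hq, rfl⟩, hpq⟩
    rw [((e.isAtom_iff q).2 (hT q hq)).le_iff_eq ((e.isAtom_iff p).2 hp).ne_bot,
      e.apply_eq_iff_eq] at hpq
    exact hpq ▸ hq
  · exact fun hpT => ⟨e p, ⟨p, hpT, rfl⟩, le_rfl⟩

section Bounds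

variable {S : Type*} [PartialOrder S]

theorem mub_comm (x y : S) : mub x y = mub y x :=
  Set.ext fun _ => ⟨fun ⟨hx, hy, h⟩ => ⟨hy, hx, fun v hy hx => h v hx hy⟩,
    fun ⟨hy, hx, h⟩ => ⟨hx, hy, fun v hx hy => h v hy hx⟩⟩

theorem mlb_comm (x y : S) : mlb x y = mlb y x :=
  Set.ext fun _ => ⟨fun ⟨hx, hy, h⟩ => ⟨hy, hx, fun v hy hx => h v hx hy⟩,
    fun ⟨hy, hx, h⟩ => ⟨hx, hy, fun v hx hy => h v hy hx⟩⟩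

theorem exists_mem_mlb_ge_s17 [Finite S] {w u v : S} (hu : w ≤ u) (hv : w ≤ v) :
    ∃ l ∈ mlb u v, w ≤ l := by
  obtain ⟨l, hwl, hl⟩ := Finite.exists_le_maximal (p := fun l => l ≤ u ∧ l ≤ v) ⟨hu, hv⟩
  exact ⟨l, ⟨hl.1.1, hl.1.2, fun m hmu hmv hlm => (hl.2 ⟨hmu, hmv⟩ hlm).antisymm hlm⟩, hwl⟩

variable [OrderBot S]

theorem bot_mem_mlb_of_not_le {x c : S} (hc : IsAtom c) (hcx : ¬ c ≤ x) : (⊥ : S) ∈ mlb x c :=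
  ⟨bot_le, bot_le, fun _ hmx hmc _ =>
    ((hc.le_iff.1 hmc).resolve_right fun h => hcx (h ▸ hmx))⟩

def atomsBelow (x : S) : Set S := {c | IsAtom c ∧ c ≤ x}

theorem natRank_eq_ncard_atomsBelow (x : S) : natRank x = (atomsBelow x).ncard := rfl

theorem atomsBelow_mono {x y : S} (h : x ≤ y) : atomsBelow x ⊆ atomsBelow y :=
  fun _ hc => ⟨hc.1, hc.2.trans h⟩

theorem natRank_bot : natRank (⊥ : S) = 0 := by
  have : atomsBelow (⊥ : S) = ∅ :=
    Set.eq_empty_of_forall_notMem fun _ hc => hc.1.1 (le_bot_iff.1 hc.2)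
  rw [natRank_eq_ncard_atomsBelow, this, Set.ncard_empty]

theorem atomsBelow_of_isAtom {a : S} (ha : IsAtom a) : atomsBelow a = {a} :=
  Set.ext fun _ => ⟨fun hc => (ha.le_iff_eq hc.1.1).1 hc.2, by rintro rfl; exact ⟨ha, le_rfl⟩⟩

theorem natRank_of_isAtom {a : S} (ha : IsAtom a) : natRank a = 1 := by
  rw [natRank_eq_ncard_atomsBelow, atomsBelow_of_isAtom ha, Set.ncard_singleton]

end Bounds

section Subtype

variable {S : Type*} [PartialOrder S] {p : S → Prop} [OrderBot (Subtype p)]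

theorem isAtom_iff_covBy_coe (hp : {x | p x}.OrdConnected) {w : Subtype p} :
    IsAtom w ↔ ((⊥ : Subtype p) : S) ⋖ w := by
  rw [← bot_covBy_iff]
  exact (Set.OrdConnected.apply_covBy_apply_iff (OrderEmbedding.subtype p)
    (by simpa using hp)).symm

variable [OrderBot S]

theorem coe_bot_of_isLowerSet (hp : IsLowerSet {x | p x}) (w : Subtype p) :
    ((⊥ : Subtype p) : S) = ⊥ :=
  le_bot_iff.1 (bot_le (a := (⟨⊥, hp bot_le w.2⟩ : Subtype p)))

theorem isAtom_coe_iff (hp : IsLowerSet {x | p x}) {w : Subtype p} :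
    IsAtom (w : S) ↔ IsAtom w := by
  rw [isAtom_iff_covBy_coe hp.ordConnected, coe_bot_of_isLowerSet hp w, bot_covBy_iff]

theorem atomsBelow_coe (hp : IsLowerSet {x | p x}) (w : Subtype p) :
    atomsBelow (w : S) = (↑) '' atomsBelow w := by
  ext c
  constructor
  · rintro ⟨hc, hcw⟩
    exact ⟨⟨c, hp hcw w.2⟩, ⟨isAtom_coe_iff hp |>.1 hc, hcw⟩, rfl⟩
  · rintro ⟨c, ⟨hc, hcw⟩, rfl⟩
    exact ⟨isAtom_coe_iff hp |>.2 hc, hcw⟩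

theorem natRank_coe (hp : IsLowerSet {x | p x}) (w : Subtype p) :
    natRank (w : S) = natRank w := by
  rw [natRank_eq_ncard_atomsBelow, natRank_eq_ncard_atomsBelow, atomsBelow_coe hp,
    Set.ncard_image_of_injective _ Subtype.val_injective]

end Subtype

namespace IsSimplicialPoset

variable {S : Type*} [PartialOrder S] [OrderBot S] [Fintype S]

theorem le_of_atomsBelow_subset (hs : IsSimplicialPoset S) {u x y : S} (hx : x ≤ u) (hy : y ≤ u)
    (h : atomsBelow x ⊆ atomsBelow y) : x ≤ y := by
  obtain ⟨e⟩ := hs u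
  have := e.isAtomistic
  have hIic : IsLowerSet {z | z ∈ Set.Iic u} := isLowerSet_Iic u
  suffices (⟨x, hx⟩ : Set.Iic u) ≤ ⟨y, hy⟩ from this
  refine le_iff_atom_le_imp.2 fun c hc hcx => ?_
  exact (h ⟨(isAtom_coe_iff hIic).2 hc, hcx⟩).2

theorem eq_of_atomsBelow_eq (hs : IsSimplicialPoset S) {u x y : S} (hx : x ≤ u) (hy : y ≤ u)
    (h : atomsBelow x = atomsBelow y) : x = y :=
  (hs.le_of_atomsBelow_subset hx hy h.le).antisymm (hs.le_of_atomsBelow_subset hy hx h.ge)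

theorem exists_atomsBelow_eq (hs : IsSimplicialPoset S) {u : S} {B : Set S}
    (hB : B ⊆ atomsBelow u) :
    ∃ x ≤ u, atomsBelow x = B := by
  obtain ⟨e⟩ := hs u
  have hIic : IsLowerSet {z | z ∈ Set.Iic u} := isLowerSet_Iic u
  obtain ⟨x, hx⟩ := e.exists_isAtom_le_iff (T := {c : Set.Iic u | (c : S) ∈ B})
    fun c hc => (isAtom_coe_iff hIic).1 (hB hc).1
  refine ⟨x, x.2, Set.ext fun c => ⟨fun ⟨hc, hcx⟩ => ?_, fun hc => ?_⟩⟩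
  · exact (hx ⟨c, hcx.trans x.2⟩ ((isAtom_coe_iff hIic).1 hc)).1 hcx
  · exact ⟨(hB hc).1, (hx ⟨c, (hB hc).2⟩ ((isAtom_coe_iff hIic).1 (hB hc).1)).2 hc⟩

theorem natRank_lt_natRank (hs : IsSimplicialPoset S) {x y : S} (h : x < y) :
    natRank x < natRank y :=
  Set.ncard_lt_ncard (Set.ssubset_iff_subset_ne.2 ⟨atomsBelow_mono h.le,
    fun he => h.ne (hs.eq_of_atomsBelow_eq h.le le_rfl he)⟩)

theorem eq_of_le_of_natRank_le (hs : IsSimplicialPoset S) {x y : S} (hxy : x ≤ y)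
    (h : natRank y ≤ natRank x) : x = y :=
  hxy.eq_of_not_lt fun hlt => (hs.natRank_lt_natRank hlt).not_ge h

theorem covBy_of_natRank_eq_add_one (hs : IsSimplicialPoset S) {x y : S} (hxy : x ≤ y)
    (h : natRank y = natRank x + 1) : x ⋖ y := by
  refine ⟨hxy.lt_of_ne fun he => by simp [he] at h, fun z hxz hzy => ?_⟩
  have := hs.natRank_lt_natRank hxz
  have := hs.natRank_lt_natRank hzy
  omega

theorem mem_mub_iff (hs : IsSimplicialPoset S) {x c z : S} (hc : IsAtom c) :
    z ∈ mub x c ↔ x ≤ z ∧ atomsBelow z = insert c (atomsBelow x) := by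
  constructor
  · rintro ⟨hxz, hcz, hmin⟩
    obtain ⟨v, hvz, hv⟩ := hs.exists_atomsBelow_eq
      (Set.insert_subset ⟨hc, hcz⟩ (atomsBelow_mono hxz))
    have hxv : x ≤ v := hs.le_of_atomsBelow_subset hxz hvz (hv ▸ Set.subset_insert _ _)
    have hcv : c ≤ v := (hv.ge (Set.mem_insert c _)).2
    exact ⟨hxz, hmin v hxv hcv hvz ▸ hv⟩
  · rintro ⟨hxz, hz⟩
    have hcz : c ≤ z := (hz.ge (Set.mem_insert c _)).2
    refine ⟨hxz, hcz, fun v hxv hcv hvz => hvz.antisymm ?_⟩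
    exact hs.le_of_atomsBelow_subset le_rfl hvz
      (hz ▸ Set.insert_subset ⟨hc, hcv⟩ (atomsBelow_mono hxv))

theorem natRank_of_mem_mub (hs : IsSimplicialPoset S) {x c z : S} (hc : IsAtom c) (hcx : ¬ c ≤ x)
    (hz : z ∈ mub x c) : natRank z = natRank x + 1 := by
  rw [natRank_eq_ncard_atomsBelow, ((hs.mem_mub_iff hc).1 hz).2,
    Set.ncard_insert_of_notMem fun h => hcx h.2]
  rfl

theorem exists_mem_mub_le_s17 (hs : IsSimplicialPoset S) {u x c : S} (hc : IsAtom c) (hxu : x ≤ u)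
    (hcu : c ≤ u) : ∃ z ≤ u, z ∈ mub x c := by
  obtain ⟨z, hzu, hz⟩ := hs.exists_atomsBelow_eq
    (Set.insert_subset ⟨hc, hcu⟩ (atomsBelow_mono hxu))
  exact ⟨z, hzu, (hs.mem_mub_iff hc).2
    ⟨hs.le_of_atomsBelow_subset hxu hzu (hz ▸ Set.subset_insert _ _), hz⟩⟩

theorem exists_mem_mub_of_le (hs : IsSimplicialPoset S) {a w : S} (ha : IsAtom a) (haw : a ≤ w) :
    ∃ c, ¬ a ≤ c ∧ w ∈ mub c a := by
  obtain ⟨c, hcw, hc⟩ := hs.exists_atomsBelow_eq (Set.sdiff_subset : atomsBelow w \ {a} ⊆ _)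
  have hac : ¬ a ≤ c := fun h => (hc.le ⟨ha, h⟩).2 rfl
  refine ⟨c, hac, (hs.mem_mub_iff ha).2 ⟨hcw, ?_⟩⟩
  rw [hc, Set.insert_sdiff_singleton, Set.insert_eq_of_mem (show a ∈ atomsBelow w from ⟨ha, haw⟩)]

/-- Covers of an atom `a` below `w` correspond to the atoms `c ≠ a` below `w`, via `c ↦ a ∨ c`. -/
theorem ncard_covBy_add_one (hs : IsSimplicialPoset S) {a w : S} (ha : IsAtom a) (haw : a ≤ w) :
    {y | a ⋖ y ∧ y ≤ w}.ncard + 1 = natRank w := by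
  choose! F hFw hF using fun c (hc : c ∈ atomsBelow w) => hs.exists_mem_mub_le_s17 hc.1 haw hc.2
  have hFatoms : ∀ c ∈ atomsBelow w, atomsBelow (F c) = {c, a} := fun c hc => by
    rw [((hs.mem_mub_iff hc.1).1 (hF c hc)).2, atomsBelow_of_isAtom ha]
  have hcov : ∀ c ∈ atomsBelow w \ {a}, a ⋖ F c := fun c hc => by
    have hca : ¬ c ≤ a := fun h => hc.2 ((ha.le_iff_eq hc.1.1.1).1 h)
    refine hs.covBy_of_natRank_eq_add_one (hF c hc.1).1 ?_
    rw [hs.natRank_of_mem_mub hc.1.1 hca (hF c hc.1)]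
  have himage : {y | a ⋖ y ∧ y ≤ w} = F '' (atomsBelow w \ {a}) := by
    ext y
    constructor
    · rintro ⟨hay, hyw⟩
      obtain ⟨c, hcy, hca⟩ := Set.not_subset.1 fun hsub =>
        hay.1.not_ge (hs.le_of_atomsBelow_subset le_rfl hay.1.le hsub)
      have hc : c ∈ atomsBelow w \ {a} :=
        ⟨atomsBelow_mono hyw hcy, fun he => hca (atomsBelow_of_isAtom ha ▸ he)⟩
      have hFy : F c ≤ y := hs.le_of_atomsBelow_subset (hFw c hc.1) hyw <| by
        rw [hFatoms c hc.1]
        exact Set.insert_subset hcy (Set.singleton_subset_iff.2 ⟨ha, hay.1.le⟩)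
      exact ⟨c, hc, hFy.eq_of_not_lt (hay.2 (hcov c hc).1)⟩
    · rintro ⟨c, hc, rfl⟩
      exact ⟨hcov c hc, hFw c hc.1⟩
  have hinj : Set.InjOn F (atomsBelow w \ {a}) := fun c hc c' hc' he => by
    have := (hFatoms c hc.1).symm.trans (he ▸ hFatoms c' hc'.1)
    exact (Set.insert_inj hc.2).1 this
  rw [himage, hinj.ncard_image,
    Set.ncard_sdiff_singleton_add_one (show a ∈ atomsBelow w from ⟨ha, haw⟩)]
  rfl

theorem natRank_add_one_eq_natRank_coe (hs : IsSimplicialPoset S) {a : S} (ha : IsAtom a)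
    [OrderBot {z : S // a ≤ z}] (w : {z : S // a ≤ z}) : natRank w + 1 = natRank (w : S) := by
  have hord : {z | a ≤ z}.OrdConnected := Set.ordConnected_Ici
  have hbot : ((⊥ : {z : S // a ≤ z}) : S) = a :=
    le_antisymm (bot_le (a := (⟨a, le_rfl⟩ : {z : S // a ≤ z}))) (⊥ : {z : S // a ≤ z}).2
  have hcovers : (↑) '' atomsBelow w = {y | a ⋖ y ∧ y ≤ w} := by
    ext y
    constructor
    · rintro ⟨y, ⟨hy, hyw⟩, rfl⟩
      have hay := (isAtom_iff_covBy_coe hord).1 hy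
      rw [hbot] at hay
      exact ⟨hay, hyw⟩
    · rintro ⟨hay, hyw⟩
      exact ⟨⟨y, hay.1.le⟩, ⟨(isAtom_iff_covBy_coe hord).2 (by rwa [hbot]), hyw⟩, rfl⟩
  rw [natRank_eq_ncard_atomsBelow, ← Set.ncard_image_of_injective _ Subtype.val_injective,
    hcovers, hs.ncard_covBy_add_one ha w.2]

end IsSimplicialPoset

section SchemeRank

variable {T : Type*} [Fintype T]

theorem le_schemeRank (g : T → ℕ) (t : T) : g t ≤ schemeRank g :=
  le_csSup (Set.finite_range g).bddAbove ⟨t, rfl⟩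

theorem exists_eq_schemeRank [Nonempty T] (g : T → ℕ) : ∃ t, g t = schemeRank g :=
  Nat.sSup_mem (Set.range_nonempty g) (Set.finite_range g).bddAbove

theorem schemeRank_eq_of_forall_le {g : T → ℕ} {m : ℕ} (hle : ∀ t, g t ≤ m) {t : T}
    (ht : g t = m) : schemeRank g = m :=
  IsGreatest.csSup_eq ⟨⟨t, ht⟩, by rintro _ ⟨s, rfl⟩; exact hle s⟩

end SchemeRank

def IsIsthmus {S : Type*} [PartialOrder S] [OrderBot S] (ρ : S → ℕ) (a : S) : Prop :=
  ∀ b ∈ Bases ρ, a ≤ b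

def deletion {S : Type*} [PartialOrder S] (ρ : S → ℕ) (a : S) (w : {x : S // ¬ a ≤ x}) : ℕ :=
  ρ w

def contraction {S : Type*} [PartialOrder S] (ρ : S → ℕ) (a : S) (w : {z : S // a ≤ z}) : ℕ :=
  ρ w - ρ a

namespace IsMatroidScheme

variable {S : Type*} [PartialOrder S] [OrderBot S] [Fintype S] {ρ : S → ℕ}

theorem rank_bot (h : IsMatroidScheme ρ) : ρ ⊥ = 0 :=
  Nat.le_zero.1 (natRank_bot (S := S) ▸ h.M1 ⊥)

theorem rank_le_one_of_isAtom (h : IsMatroidScheme ρ) {a : S} (ha : IsAtom a) : ρ a ≤ 1 :=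
  natRank_of_isAtom ha ▸ h.M1 a

theorem rank_mub_le (h : IsMatroidScheme ρ) {x c z : S} (hc : IsAtom c) (hcx : ¬ c ≤ x)
    (hz : z ∈ mub x c) : ρ z ≤ ρ x + ρ c := by
  have := h.M3 x c z ⊥ hz (bot_mem_mlb_of_not_le hc hcx)
  rw [h.rank_bot] at this
  omega

/-- The span argument: submodularity (M3) propagates `ρ (b ∨ c) ≤ ρ b` from `b` to every `x ≥ b`,
one atom at a time. -/
theorem rank_le_of_forall_mub_le (h : IsMatroidScheme ρ) {b x : S} (hbx : b ≤ x)
    (hstep : ∀ c z, IsAtom c → c ≤ x → ¬ c ≤ b → z ≤ x → z ∈ mub b c → ρ z ≤ ρ b) :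
    ρ x ≤ ρ b := by
  have hs := h.simplicial
  induction x using WellFoundedLT.induction with
  | ind x ih =>
  by_cases hx : atomsBelow x ⊆ atomsBelow b
  · exact h.M2 (hs.le_of_atomsBelow_subset le_rfl hbx hx)
  obtain ⟨c, ⟨hc, hcx⟩, hcb⟩ := Set.not_subset.1 hx
  replace hcb : ¬ c ≤ b := fun hcb' => hcb ⟨hc, hcb'⟩
  obtain ⟨x₀, hcx₀, hx₀⟩ := hs.exists_mem_mub_of_le hc hcx
  obtain ⟨z, hzx, hz⟩ := hs.exists_mem_mub_le_s17 hc hbx hcx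
  have hx₀_atoms := ((hs.mem_mub_iff hc).1 hx₀).2
  have hz_atoms := ((hs.mem_mub_iff hc).1 hz).2
  have hbx₀ : b ≤ x₀ := by
    refine hs.le_of_atomsBelow_subset hbx hx₀.1 fun d hd => ?_
    have hd' : d ∈ insert c (atomsBelow x₀) := hx₀_atoms ▸ atomsBelow_mono hbx hd
    exact hd'.resolve_left fun hdc => hcb (hdc ▸ hd.2)
  have hmub : x ∈ mub x₀ z :=
    ⟨hx₀.1, hzx, fun v hx₀v hzv hvx => hx₀.2.2 v hx₀v (hz.2.1.trans hzv) hvx⟩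
  have hmlb : b ∈ mlb x₀ z := by
    refine ⟨hbx₀, hz.1, fun m hmx₀ hmz hbm => ?_⟩
    have hmb : atomsBelow m ⊆ atomsBelow b := fun d hd => by
      have hd' : d ∈ insert c (atomsBelow b) := hz_atoms ▸ atomsBelow_mono hmz hd
      exact hd'.resolve_left fun hdc => hcx₀ (hdc ▸ hd.2.trans hmx₀)
    exact hs.eq_of_atomsBelow_eq (hmx₀.trans hx₀.1) (hbx₀.trans hx₀.1)
      (hmb.antisymm (atomsBelow_mono hbm))
  have hx₀x : x₀ < x := hx₀.1.lt_of_ne fun he => hcx₀ (he ▸ hcx)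
  have h₀ := ih x₀ hx₀x hbx₀ fun c' z' hc' hc'x₀ hc'b hz'x₀ hz' =>
    hstep c' z' hc' (hc'x₀.trans hx₀.1) hc'b (hz'x₀.trans hx₀.1) hz'
  have := h.M3 x₀ z x b hmub hmlb
  have := hstep c z hc hcx hcb hzx hz
  omega

theorem rank_eq_of_maximal (h : IsMatroidScheme ρ) {b u : S}
    (hb : Maximal (fun z => z ≤ u ∧ ρ z = natRank z) b) : ρ u = ρ b := by
  refine (h.rank_le_of_forall_mub_le hb.1.1 fun c z hc hcu hcb hzu hz => ?_).antisymm
    (h.M2 hb.1.1)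
  by_contra! hlt
  have := h.rank_mub_le hc hcb hz
  have := h.rank_le_one_of_isAtom hc
  have := h.simplicial.natRank_of_mem_mub hc hcb hz
  have := h.M1 z
  have := hb.1.2
  have hzb : z ≤ b := hb.2 ⟨hzu, by omega⟩ hz.1
  exact hcb (hz.2.1.trans hzb)

theorem rank_eq_schemeRank_of_isMax (h : IsMatroidScheme ρ) {z : S} (hz : IsMax z) :
    ρ z = schemeRank ρ := by
  obtain ⟨w, hw⟩ := exists_eq_schemeRank ρ
  refine (le_schemeRank ρ z).antisymm (not_lt.1 fun hlt => ?_)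
  obtain ⟨c, -, -, hcz, v, hv⟩ := h.M5 z w (hw ▸ hlt)
  exact hcz (hv.2.1.trans (hz hv.1))

theorem exists_rank_eq_schemeRank_ge (h : IsMatroidScheme ρ) (x : S) :
    ∃ z, x ≤ z ∧ ρ z = schemeRank ρ := by
  obtain ⟨z, hxz, hz⟩ := Finite.exists_le_maximal (p := fun _ : S => True) (a := x) trivial
  exact ⟨z, hxz, h.rank_eq_schemeRank_of_isMax fun v hv => hz.2 trivial hv⟩

theorem rank_eq_schemeRank_of_mem_bases (h : IsMatroidScheme ρ) {b : S} (hb : b ∈ Bases ρ) :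
    ρ b = schemeRank ρ := by
  obtain ⟨z, hbz, hz⟩ := h.exists_rank_eq_schemeRank_ge b
  rw [← hz, h.rank_eq_of_maximal ⟨⟨hbz, hb.1⟩, fun w hw hbw => (hb.2 w hw.2 hbw).le⟩]

theorem exists_mem_bases_le (h : IsMatroidScheme ρ) {w : S} (hw : ρ w = schemeRank ρ) :
    ∃ b ∈ Bases ρ, b ≤ w := by
  obtain ⟨b, -, hb⟩ := Finite.exists_le_maximal (p := fun z => z ≤ w ∧ ρ z = natRank z)
    ⟨bot_le, by rw [h.rank_bot, natRank_bot]⟩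
  have hbw := h.rank_eq_of_maximal hb
  refine ⟨b, ⟨hb.1.2, fun v hv hbv => (h.simplicial.eq_of_le_of_natRank_le hbv ?_).symm⟩, hb.1.1⟩
  have := le_schemeRank ρ v
  have := hb.1.2
  omega

theorem bases_nonempty (h : IsMatroidScheme ρ) : (Bases ρ).Nonempty := by
  obtain ⟨w, hw⟩ := exists_eq_schemeRank ρ
  obtain ⟨b, hb, -⟩ := h.exists_mem_bases_le hw
  exact ⟨b, hb⟩

theorem rank_lt_natRank_of_loop_le (h : IsMatroidScheme ρ) {a w : S} (ha : IsAtom a) (hl : ρ a = 0)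
    (haw : a ≤ w) : ρ w < natRank w := by
  obtain ⟨c, hac, hw⟩ := h.simplicial.exists_mem_mub_of_le ha haw
  have := h.rank_mub_le ha hac hw
  have := h.simplicial.natRank_of_mem_mub ha hac hw
  have := h.M1 c
  omega

theorem existsUnique_mem_mub_of_loop (h : IsMatroidScheme ρ) {a w : S} (ha : IsAtom a)
    (hl : ρ a = 0) (haw : ¬ a ≤ w) : ∃! z, z ∈ mub w a := by
  have hs := h.simplicial
  obtain ⟨z, hz⟩ := h.M4 a w ⊥ (mlb_comm w a ▸ bot_mem_mlb_of_not_le ha haw)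
    (by rw [hl, h.rank_bot])
  rw [mub_comm] at hz
  refine ⟨z, hz, fun u hu => ?_⟩
  obtain ⟨l, hl', hwl⟩ := exists_mem_mlb_ge_s17 hu.1 hz.1
  have := h.rank_mub_le ha haw hu
  have := h.M2 hwl
  have := h.M2 hl'.1
  obtain ⟨v, hv⟩ := h.M4 u z l hl' (by omega)
  exact hs.eq_of_atomsBelow_eq hv.1 hv.2.1
    (((hs.mem_mub_iff ha).1 hu).2.trans ((hs.mem_mub_iff ha).1 hz).2.symm)

theorem rank_lt_schemeRank_of_isIsthmus (h : IsMatroidScheme ρ) {a w : S} (hi : IsIsthmus ρ a)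
    (haw : ¬ a ≤ w) : ρ w < schemeRank ρ := by
  refine (le_schemeRank ρ w).lt_of_ne fun hw => ?_
  obtain ⟨b, hb, hbw⟩ := h.exists_mem_bases_le hw
  exact haw ((hi b hb).trans hbw)

theorem rank_eq_one_of_isIsthmus (h : IsMatroidScheme ρ) {a : S} (ha : IsAtom a)
    (hi : IsIsthmus ρ a) : ρ a = 1 := by
  obtain ⟨b, hb⟩ := h.bases_nonempty
  have := h.rank_le_one_of_isAtom ha
  by_contra hne
  have := h.rank_lt_natRank_of_loop_le ha (by omega) (hi b hb)
  have := hb.1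
  omega

theorem exists_not_le_schemeRank_le_rank_add_one (h : IsMatroidScheme ρ) {a : S}
    (ha : IsAtom a) (hi : IsIsthmus ρ a) : ∃ c, ¬ a ≤ c ∧ schemeRank ρ ≤ ρ c + 1 := by
  obtain ⟨b, hb⟩ := h.bases_nonempty
  obtain ⟨c, hac, hbc⟩ := h.simplicial.exists_mem_mub_of_le ha (hi b hb)
  have := h.rank_mub_le ha hac hbc
  have := h.rank_le_one_of_isAtom ha
  have := h.rank_eq_schemeRank_of_mem_bases hb
  exact ⟨c, hac, by omega⟩

end IsMatroidScheme

section Tutte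

variable {T : Type*} [PartialOrder T] [OrderBot T] [Fintype T]

noncomputable def tutteTerm (ρ : T → ℕ) (x y : ℤ) (w : T) : ℤ :=
  (x - 1) ^ (schemeRank ρ - ρ w) * (y - 1) ^ (natRank w - ρ w)

theorem tutte_eq_sum_tutteTerm (ρ : T → ℕ) (x y : ℤ) : tutte ρ x y = ∑ w, tutteTerm ρ x y w :=
  rfl

theorem tutte_eq_sum_above_add_sum_not_above (ρ : T → ℕ) (a : T) [Fintype {z // a ≤ z}]
    [Fintype {z // ¬ a ≤ z}] (x y : ℤ) :
    tutte ρ x y =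
      ∑ w : {z // a ≤ z}, tutteTerm ρ x y w + ∑ w : {z // ¬ a ≤ z}, tutteTerm ρ x y w := by
  classical
  rw [tutte_eq_sum_tutteTerm, ← Fintype.sum_subtype_add_sum_subtype (a ≤ ·)]
  congr!

end Tutte

theorem isLowerSet_not_le {S : Type*} [Preorder S] (a : S) : IsLowerSet {x | ¬ a ≤ x} :=
  fun _ _ hyx hx hay => hx (hay.trans hyx)

namespace IsMatroidScheme

variable {S : Type*} [PartialOrder S] [OrderBot S] [Fintype S] {ρ : S → ℕ} {a : S}

theorem schemeRank_contraction (h : IsMatroidScheme ρ) (a : S) [Fintype {z : S // a ≤ z}] :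
    schemeRank (contraction ρ a) = schemeRank ρ - ρ a := by
  obtain ⟨z, haz, hz⟩ := h.exists_rank_eq_schemeRank_ge a
  exact schemeRank_eq_of_forall_le (fun w => Nat.sub_le_sub_right (le_schemeRank ρ w) _)
    (t := ⟨z, haz⟩) (by rw [contraction, hz])

/-- The exponent `1 - ρ a` is `1` exactly for a loop, which raises the nullity of every element
above it. -/
theorem sum_tutteTerm_above [OrderBot {z : S // a ≤ z}] [Fintype {z : S // a ≤ z}]
    (h : IsMatroidScheme ρ) (ha : IsAtom a) (x y : ℤ) :
    ∑ w : {z // a ≤ z}, tutteTerm ρ x y w = (y - 1) ^ (1 - ρ a) * tutte (contraction ρ a) x y := by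
  rw [tutte_eq_sum_tutteTerm, Finset.mul_sum]
  refine Finset.sum_congr rfl fun w _ => ?_
  have hn := h.simplicial.natRank_add_one_eq_natRank_coe ha w
  have := h.M2 w.2
  have := le_schemeRank ρ w
  have ha1 := h.rank_le_one_of_isAtom ha
  have hdep : ρ w + 1 ≤ natRank (w : S) + ρ a := by
    rcases ha1.lt_or_eq with hl | hl
    · have := h.rank_lt_natRank_of_loop_le ha (by omega) w.2
      omega
    · have := h.M1 w
      omega
  rw [tutteTerm, tutteTerm, contraction, h.schemeRank_contraction,
    show schemeRank ρ - ρ a - (ρ w - ρ a) = schemeRank ρ - ρ w by omega,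
    show natRank (w : S) - ρ w = (1 - ρ a) + (natRank w - (ρ w - ρ a)) by omega, pow_add]
  ring

theorem sum_tutteTerm_not_above_of_not_isIsthmus [OrderBot {x : S // ¬ a ≤ x}]
    [Fintype {x : S // ¬ a ≤ x}] (h : IsMatroidScheme ρ) (hi : ¬ IsIsthmus ρ a) (x y : ℤ) :
    ∑ w : {z // ¬ a ≤ z}, tutteTerm ρ x y w = tutte (deletion ρ a) x y := by
  obtain ⟨b, hb, hab⟩ : ∃ b ∈ Bases ρ, ¬ a ≤ b := by simpa [IsIsthmus] using hi
  have hr : schemeRank (deletion ρ a) = schemeRank ρ :=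
    schemeRank_eq_of_forall_le (fun w => le_schemeRank ρ w) (t := ⟨b, hab⟩)
      (h.rank_eq_schemeRank_of_mem_bases hb)
  rw [tutte_eq_sum_tutteTerm]
  refine Finset.sum_congr rfl fun w _ => ?_
  rw [tutteTerm, tutteTerm, hr, natRank_coe (isLowerSet_not_le a) w]
  rfl

theorem sum_tutteTerm_not_above_of_isIsthmus [OrderBot {x : S // ¬ a ≤ x}]
    [Fintype {x : S // ¬ a ≤ x}] (h : IsMatroidScheme ρ) (ha : IsAtom a) (hi : IsIsthmus ρ a)
    (x y : ℤ) :
    ∑ w : {z // ¬ a ≤ z}, tutteTerm ρ x y w = (x - 1) * tutte (deletion ρ a) x y := by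
  obtain ⟨c, hac, hc⟩ := h.exists_not_le_schemeRank_le_rank_add_one ha hi
  have hlt (w : {z // ¬ a ≤ z}) : ρ w < schemeRank ρ := h.rank_lt_schemeRank_of_isIsthmus hi w.2
  have hr : schemeRank (deletion ρ a) = schemeRank ρ - 1 := by
    have := h.rank_lt_schemeRank_of_isIsthmus hi hac
    exact schemeRank_eq_of_forall_le (fun w => Nat.le_sub_one_of_lt (hlt w)) (t := ⟨c, hac⟩)
      (show ρ c = _ by omega)
  rw [tutte_eq_sum_tutteTerm, Finset.mul_sum]
  refine Finset.sum_congr rfl fun w _ => ?_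
  have := hlt w
  rw [tutteTerm, tutteTerm, hr, natRank_coe (isLowerSet_not_le a) w, deletion,
    show schemeRank ρ - ρ w = schemeRank ρ - 1 - ρ w + 1 by omega, pow_succ]
  ring

/-- For a loop `a`, `w ↦ w ∨ a` is a rank- and nullity-preserving bijection from the deletion onto
the contraction. -/
theorem sum_tutteTerm_not_above_of_loop [Fintype {x : S // ¬ a ≤ x}] [OrderBot {z : S // a ≤ z}]
    [Fintype {z : S // a ≤ z}] (h : IsMatroidScheme ρ) (ha : IsAtom a) (hl : ρ a = 0) (x y : ℤ) :
    ∑ w : {z // ¬ a ≤ z}, tutteTerm ρ x y w = tutte (contraction ρ a) x y := by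
  have hs := h.simplicial
  choose Φ hΦ hΦu using fun w : {z // ¬ a ≤ z} => h.existsUnique_mem_mub_of_loop ha hl w.2
  have hatoms (w : {z // ¬ a ≤ z}) : atomsBelow (w : S) = atomsBelow (Φ w) \ {a} := by
    rw [((hs.mem_mub_iff ha).1 (hΦ w)).2, Set.insert_sdiff_self_of_notMem fun haw => w.2 haw.2]
  have hinj : Function.Injective fun w => (⟨Φ w, (hΦ w).2.1⟩ : {z // a ≤ z}) := by
    intro w w' he
    have he : Φ w = Φ w' := congrArg Subtype.val he
    exact Subtype.ext (hs.eq_of_atomsBelow_eq (hΦ w).1 (he ▸ (hΦ w').1)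
      (by rw [hatoms, hatoms, he]))
  have hsurj : Function.Surjective fun w => (⟨Φ w, (hΦ w).2.1⟩ : {z // a ≤ z}) := by
    intro z
    obtain ⟨c, hac, hz⟩ := hs.exists_mem_mub_of_le ha z.2
    exact ⟨⟨c, hac⟩, Subtype.ext (hΦu ⟨c, hac⟩ z hz).symm⟩
  rw [tutte_eq_sum_tutteTerm]
  refine Fintype.sum_bijective _ ⟨hinj, hsurj⟩ _ _ fun w => ?_
  have hn : natRank (⟨Φ w, (hΦ w).2.1⟩ : {z // a ≤ z}) + 1 = natRank (Φ w) :=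
    hs.natRank_add_one_eq_natRank_coe ha _
  have := hs.natRank_of_mem_mub ha w.2 (hΦ w)
  have := h.rank_mub_le ha w.2 (hΦ w)
  have := h.M2 (hΦ w).1
  dsimp only [tutteTerm, contraction]
  rw [h.schemeRank_contraction, hl]
  congr 2 <;> omega

-- Implicit, not instance-implicit: the instances are then read off the goal by unification.
variable {botC : OrderBot {z : S // a ≤ z}} {finC : Fintype {z : S // a ≤ z}}
  {botD : OrderBot {x : S // ¬ a ≤ x}} {finD : Fintype {x : S // ¬ a ≤ x}}

theorem tutte_eq_tutte_deletion_add_tutte_contraction (h : IsMatroidScheme ρ) (ha : IsAtom a)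
    (hl : ρ a ≠ 0) (hi : ¬ IsIsthmus ρ a) (x y : ℤ) :
    tutte ρ x y = tutte (deletion ρ a) x y + tutte (contraction ρ a) x y := by
  have : 1 - ρ a = 0 := by
    have := h.rank_le_one_of_isAtom ha
    omega
  rw [tutte_eq_sum_above_add_sum_not_above ρ a, h.sum_tutteTerm_above ha,
    h.sum_tutteTerm_not_above_of_not_isIsthmus hi, this, pow_zero, one_mul, add_comm]

theorem tutte_eq_mul_tutte_contraction_of_loop (h : IsMatroidScheme ρ) (ha : IsAtom a)
    (hl : ρ a = 0) (x y : ℤ) : tutte ρ x y = y * tutte (contraction ρ a) x y := by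
  classical
  rw [tutte_eq_sum_above_add_sum_not_above ρ a, h.sum_tutteTerm_above ha,
    h.sum_tutteTerm_not_above_of_loop ha hl, hl]
  ring

theorem tutte_eq_mul_tutte_deletion_add_tutte_contraction_of_isIsthmus (h : IsMatroidScheme ρ)
    (ha : IsAtom a) (hi : IsIsthmus ρ a) (x y : ℤ) :
    tutte ρ x y = (x - 1) * tutte (deletion ρ a) x y + tutte (contraction ρ a) x y := by
  rw [tutte_eq_sum_above_add_sum_not_above ρ a, h.sum_tutteTerm_above ha,
    h.sum_tutteTerm_not_above_of_isIsthmus ha hi, h.rank_eq_one_of_isIsthmus ha hi]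
  ring

end IsMatroidScheme

/-- Theorem 10.2: the Tutte polynomial of a matroid scheme satisfies a
deletion–contraction recurrence with respect to an atom `a`. -/
theorem statement17 {S : Type*} [PartialOrder S] [OrderBot S] [Fintype S]
    (ρ : S → ℕ) (h : IsMatroidScheme ρ) (a : S) (ha : IsAtom a) :
    letI : OrderBot {x : S // ¬ a ≤ x} :=
      { bot := ⟨⊥, fun hab => ha.1 (le_bot_iff.mp hab)⟩
        bot_le := fun x => by exact bot_le (a := x.val) }
    letI : Fintype {x : S // ¬ a ≤ x} := Fintype.ofFinite _
    letI : OrderBot {z : S // a ≤ z} :=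
      { bot := ⟨a, le_refl a⟩
        bot_le := fun z => by exact z.2 }
    letI : Fintype {z : S // a ≤ z} := Fintype.ofFinite _
    -- (1) `a` neither a loop nor an isthmus
    (ρ a ≠ 0 → ¬ (∀ b ∈ Bases ρ, a ≤ b) →
      ∀ x y : ℤ, tutte ρ x y =
        tutte (fun w : {x : S // ¬ a ≤ x} => ρ w.val) x y +
        tutte (fun w : {z : S // a ≤ z} => ρ w.val - ρ a) x y) ∧
    -- (2) `a` a loop
    (ρ a = 0 →
      ∀ x y : ℤ, tutte ρ x y =
        y * tutte (fun w : {z : S // a ≤ z} => ρ w.val - ρ a) x y) ∧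
    -- (3) `a` an isthmus
    ((∀ b ∈ Bases ρ, a ≤ b) →
      ∀ x y : ℤ, tutte ρ x y =
        (x - 1) * tutte (fun w : {x : S // ¬ a ≤ x} => ρ w.val) x y +
        tutte (fun w : {z : S // a ≤ z} => ρ w.val - ρ a) x y) := by
  exact ⟨fun hl hi => h.tutte_eq_tutte_deletion_add_tutte_contraction ha hl hi,
    fun hl => h.tutte_eq_mul_tutte_contraction_of_loop ha hl,
    fun hi => h.tutte_eq_mul_tutte_deletion_add_tutte_contraction_of_isIsthmus ha hi⟩
end
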